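/- For any β ∈ (0, 1) and any γ ∈ [0, 1] with β ≤ 1 − γ, one has √(1 − γ)·φ(β/(1 − γ)) ≥ φ(β), where φ is extended by φ(β) = 0 for β ≤ 1/2. -/

import Mathlib

/-!
Writing `x = β / (1 - γ)`, we have `√(1 - γ) = √β / √x` and `β ≤ x ≤ 1`, so the inequality says
that `φ(x) / √x` is nondecreasing on `(0, 1]`. This ratio vanishes up to `1/2`, equals
`√(2 - 1/x)` on `[1/2, 3/4]` and `√2 · √x / (1 + √(1 - x))` on `[3/4, 1]`; each piece is
nondecreasing and the pieces agree at the break points.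
-/

noncomputable def phi (β : ℝ) : ℝ :=
  if β ≤ 1/2 then 0
  else if β ≤ 3/4 then Real.sqrt (2 * β - 1)
  else Real.sqrt 2 * (1 - Real.sqrt (1 - β))

open Set Real

lemma phi_of_le_half {β : ℝ} (hβ : β ≤ 1/2) : phi β = 0 := if_pos hβ

lemma phi_of_mem_Icc {β : ℝ} (hβ : β ∈ Icc (1/2 : ℝ) (3/4)) : phi β = √(2 * β - 1) := by
  unfold phi
  split_ifs with h₁ h₂
  · rw [le_antisymm h₁ hβ.1]; norm_num
  · rfl
  · exact absurd hβ.2 h₂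

lemma phi_of_three_quarters_le {β : ℝ} (hβ : 3/4 ≤ β) : phi β = √2 * (1 - √(1 - β)) := by
  unfold phi
  split_ifs with h₁ h₂
  · linarith
  · rw [le_antisymm h₂ hβ, show (2 : ℝ) * (3/4) - 1 = 2 * (1/2)^2 by norm_num,
      show (1 : ℝ) - 3/4 = (1/2)^2 by norm_num, sqrt_mul zero_le_two, sqrt_sq (by norm_num)]
    norm_num
  · rfl

lemma sqrt_two_mul_sub_one_div_sqrt {β : ℝ} (hβ : 1/2 ≤ β) :
    √(2 * β - 1) / √β = √(2 - β⁻¹) := by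
  rw [← sqrt_div (by linarith)]
  congr 1
  field_simp

lemma one_sub_sqrt_one_sub_div_sqrt {β : ℝ} (hβ : β ∈ Ioc (0 : ℝ) 1) :
    (1 - √(1 - β)) / √β = √β / (1 + √(1 - β)) := by
  have hs : √(1 - β) ^ 2 = 1 - β := sq_sqrt (by linarith [hβ.2])
  rw [div_eq_div_iff (sqrt_pos.2 hβ.1).ne' (by positivity)]
  nlinarith [mul_self_sqrt hβ.1.le]

lemma monotoneOn_phi_div_sqrt : MonotoneOn (fun β => phi β / √β) (Ioc 0 1) := by
  have h₁ : MonotoneOn (fun β => phi β / √β) (Ioc 0 (1/2)) := fun a ha b hb _ => by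
    simp only [phi_of_le_half ha.2, phi_of_le_half hb.2, zero_div, le_refl]
  have h₂ : MonotoneOn (fun β => phi β / √β) (Icc (1/2) (3/4)) := by
    intro a ha b hb hab
    have ha₀ : 0 < a := by linarith [ha.1]
    simp only [phi_of_mem_Icc ha, phi_of_mem_Icc hb, sqrt_two_mul_sub_one_div_sqrt ha.1,
      sqrt_two_mul_sub_one_div_sqrt hb.1]
    exact sqrt_le_sqrt (by linarith [inv_anti₀ ha₀ hab])
  have h₃ : MonotoneOn (fun β => phi β / √β) (Icc (3/4) 1) := by
    intro a ha b hb hab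
    have ha' : a ∈ Ioc (0 : ℝ) 1 := ⟨by linarith [ha.1], ha.2⟩
    have hb' : b ∈ Ioc (0 : ℝ) 1 := ⟨by linarith [hb.1], hb.2⟩
    simp only [phi_of_three_quarters_le ha.1, phi_of_three_quarters_le hb.1, mul_div_assoc,
      one_sub_sqrt_one_sub_div_sqrt ha', one_sub_sqrt_one_sub_div_sqrt hb']
    gcongr ?_ * ?_
    exact div_le_div₀ (sqrt_nonneg _) (sqrt_le_sqrt hab) (by positivity)
      (by gcongr)
  have h₁₂ := h₁.union_right h₂ (isGreatest_Ioc (by norm_num)) (isLeast_Icc (by norm_num))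
  rw [Ioc_union_Icc_eq_Ioc (by norm_num) (by norm_num)] at h₁₂
  have h := h₁₂.union_right h₃ (isGreatest_Ioc (by norm_num)) (isLeast_Icc (by norm_num))
  rwa [Ioc_union_Icc_eq_Ioc (by norm_num) (by norm_num)] at h

theorem stmt_4 (β γ : ℝ) (hβ : β ∈ Set.Ioo (0:ℝ) 1) (hγ : γ ∈ Set.Icc (0:ℝ) 1)
    (h : β ≤ 1 - γ) :
    phi β ≤ Real.sqrt (1 - γ) * phi (β / (1 - γ)) := by
  have ht : 0 < 1 - γ := hβ.1.trans_le h
  have hx : β / (1 - γ) ∈ Ioc 0 1 := ⟨div_pos hβ.1 ht, (div_le_one ht).2 h⟩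
  have hβx : β ≤ β / (1 - γ) := le_div_self hβ.1.le ht (by linarith [hγ.1])
  have hsqrt : √β = √(1 - γ) * √(β / (1 - γ)) := by
    rw [← sqrt_mul ht.le, mul_div_cancel₀ _ ht.ne']
  calc phi β = √β * (phi β / √β) := (mul_div_cancel₀ _ (sqrt_pos.2 hβ.1).ne').symm
    _ ≤ √β * (phi (β / (1 - γ)) / √(β / (1 - γ))) :=
      mul_le_mul_of_nonneg_left (monotoneOn_phi_div_sqrt ⟨hβ.1, hβ.2.le⟩ hx hβx) (sqrt_nonneg _)
    _ = √(1 - γ) * phi (β / (1 - γ)) := by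
      rw [hsqrt, mul_assoc, mul_div_cancel₀ _ (sqrt_pos.2 hx.1).ne']
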